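/- Let F be a finite set of affine functions on ℤ (each of the form f(z) = a·z + b with a, b ∈ ℤ), let k ∈ ℤ with k ≠ 0, and let x, y ∈ ℤ. Then the proposition 'there exists an F-composition G with G(x) ≡ y (mod k)' is decidable. -/

import Mathlib

/-- The affine function `z ↦ a·z + b` encoded by the coefficient pair `(a, b)`. -/
def affineFn (p : ℤ × ℤ) (z : ℤ) : ℤ := p.1 * z + p.2

/-- Apply the `F`-composition given by the tuple `L = (f₁, …, f_K)` (i.e. the map
`f_K ∘ ⋯ ∘ f₁`) to `x`. -/
def applyComp (L : List (ℤ × ℤ)) (x : ℤ) : ℤ := L.foldl (fun z p => affineFn p z) x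

/-!
Reduction modulo `k` commutes with affine maps, so the residues of the values `G(x)` are the
closure of `x mod k` under the finitely many induced maps of `ℤ/|k|`. Saturating a list of
residues under these maps, each round either adds one of the `|k|` residues or reaches a fixed
point, so `|k|` rounds compute the closure, and this saturation is primitive recursive.
-/

section Saturation

variable {α : Type*} {g : List α → List α}

theorem iterate_subset_iterate_of_le (hinfl : ∀ S, S ⊆ g S) (S : List α) {m n : ℕ}
    (h : m ≤ n) : g^[m] S ⊆ g^[n] S := by
  induction n, h using Nat.le_induction with
  | base => exact List.Subset.refl _
  | succ n _ ih => exact List.Subset.trans ih (by rw [Function.iterate_succ_apply']; exact hinfl _)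

theorem iterate_subset_of_iterate_succ_subset (hmono : ∀ S T, S ⊆ T → g S ⊆ g T)
    {S : List α} {n : ℕ} (hn : g^[n + 1] S ⊆ g^[n] S) (j : ℕ) : g^[n + j] S ⊆ g^[n] S := by
  induction j with
  | zero => exact List.Subset.refl _
  | succ j ih =>
    rw [← add_assoc, Function.iterate_succ_apply']
    exact List.Subset.trans (hmono _ _ ih) (by rwa [← Function.iterate_succ_apply' g n])

-- Each round either adds a new element of `U` or has reached a fixed point.
theorem iterate_subset_iterate_card [DecidableEq α] (hmono : ∀ S T, S ⊆ T → g S ⊆ g T)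
    (hinfl : ∀ S, S ⊆ g S) {S : List α} {U : Finset α} (hU : ∀ n, ∀ a ∈ g^[n] S, a ∈ U)
    (m : ℕ) : g^[m] S ⊆ g^[U.card] S := by
  by_cases hfix : ∃ n < U.card, g^[n + 1] S ⊆ g^[n] S
  · obtain ⟨n, hn, hsub⟩ := hfix
    calc g^[m] S ⊆ g^[n + m] S := iterate_subset_iterate_of_le hinfl S (by omega)
      _ ⊆ g^[n] S := iterate_subset_of_iterate_succ_subset hmono hsub m
      _ ⊆ g^[U.card] S := iterate_subset_iterate_of_le hinfl S hn.le
  · push Not at hfix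
    have hcard : ∀ n ≤ U.card, n ≤ (g^[n] S).toFinset.card := by
      intro n hn
      induction n with
      | zero => exact Nat.zero_le _
      | succ n ih =>
        have hssub : (g^[n] S).toFinset ⊂ (g^[n + 1] S).toFinset := by
          refine Finset.ssubset_iff_subset_ne.2 ⟨fun a ha => ?_, fun heq => hfix n hn ?_⟩
          · exact List.mem_toFinset.2
              (iterate_subset_iterate_of_le hinfl S n.le_succ (List.mem_toFinset.1 ha))
          · exact fun a ha => List.mem_toFinset.1 (heq ▸ List.mem_toFinset.2 ha)
        exact (ih (by omega)).trans_lt (Finset.card_lt_card hssub)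
    have hall : (g^[U.card] S).toFinset = U :=
      Finset.eq_of_subset_of_card_le (fun a ha => hU _ a (List.mem_toFinset.1 ha))
        (hcard _ le_rfl)
    intro a ha
    rw [← List.mem_toFinset, hall]
    exact hU m a ha

end Saturation

theorem applyComp_append_singleton (G : List (ℤ × ℤ)) (p : ℤ × ℤ) (x : ℤ) :
    applyComp (G ++ [p]) x = p.1 * applyComp G x + p.2 := by
  simp [applyComp, affineFn]

theorem Int.toNat_emod_inj {a b k : ℤ} (hk : k ≠ 0) :
    (a % k).toNat = (b % k).toNat ↔ a ≡ b [ZMOD k] := by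
  have := Int.emod_nonneg a hk
  have := Int.emod_nonneg b hk
  rw [Int.ModEq]
  omega

theorem Int.toNat_emod_lt (a : ℤ) {k : ℤ} (hk : k ≠ 0) : (a % k).toNat < k.natAbs := by
  have := Int.emod_lt a hk
  omega

theorem Int.toNat_emod_affine (a b z : ℤ) {k : ℤ} (hk : k ≠ 0) :
    ((a * z + b) % k).toNat = ((a % k).toNat * (z % k).toNat + (b % k).toNat) % k.natAbs := by
  have hcast (c : ℤ) : ((c % k).toNat : ℤ) = c % k := Int.toNat_of_nonneg (Int.emod_nonneg c hk)
  zify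
  rw [hcast, hcast, hcast, hcast, Int.emod_abs]
  exact ((Int.mod_modEq a k).mul (Int.mod_modEq z k) |>.add (Int.mod_modEq b k)).symm

def residueStep (c : List (ℕ × ℕ)) (K : ℕ) (S : List ℕ) : List ℕ :=
  S ++ S.flatMap fun z => c.map fun p => (p.1 * z + p.2) % K

theorem mem_residueStep {c : List (ℕ × ℕ)} {K : ℕ} {S : List ℕ} {r : ℕ} :
    r ∈ residueStep c K S ↔ r ∈ S ∨ ∃ z ∈ S, ∃ p ∈ c, (p.1 * z + p.2) % K = r := by
  simp [residueStep]

theorem residueStep_mono (c : List (ℕ × ℕ)) (K : ℕ) {S T : List ℕ} (h : S ⊆ T) :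
    residueStep c K S ⊆ residueStep c K T := by
  intro r
  simp only [mem_residueStep]
  rintro (hr | ⟨z, hz, hp⟩)
  exacts [Or.inl (h hr), Or.inr ⟨z, h hz, hp⟩]

theorem subset_residueStep (c : List (ℕ × ℕ)) (K : ℕ) (S : List ℕ) : S ⊆ residueStep c K S :=
  List.subset_append_left _ _

def residueCoeffs (F : List (ℤ × ℤ)) (k : ℤ) : List (ℕ × ℕ) :=
  F.map fun p => ((p.1 % k).toNat, (p.2 % k).toNat)

/-- The residues modulo `k` of the `F`-compositions of length at most `n` applied to `x`. -/
def reachableResidues (F : List (ℤ × ℤ)) (x k : ℤ) (n : ℕ) : List ℕ :=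
  (residueStep (residueCoeffs F k) k.natAbs)^[n] [(x % k).toNat]

theorem reachableResidues_succ (F : List (ℤ × ℤ)) (x k : ℤ) (n : ℕ) :
    reachableResidues F x k (n + 1) =
      residueStep (residueCoeffs F k) k.natAbs (reachableResidues F x k n) :=
  Function.iterate_succ_apply' _ _ _

theorem exists_comp_of_mem_reachableResidues {F : List (ℤ × ℤ)} {x k : ℤ} (hk : k ≠ 0)
    {n : ℕ} {r : ℕ} (hr : r ∈ reachableResidues F x k n) :
    ∃ G : List (ℤ × ℤ), (∀ p ∈ G, p ∈ F) ∧ (applyComp G x % k).toNat = r := by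
  induction n generalizing r with
  | zero => exact ⟨[], by simp, (List.mem_singleton.1 hr).symm⟩
  | succ n ih =>
    rcases mem_residueStep.1 (reachableResidues_succ F x k n ▸ hr) with hr | ⟨z, hz, p', hp', rfl⟩
    · exact ih hr
    obtain ⟨p, hpF, rfl⟩ := List.mem_map.1 hp'
    obtain ⟨G, hG, rfl⟩ := ih hz
    refine ⟨G ++ [p], fun q hq => ?_, ?_⟩
    · rcases List.mem_append.1 hq with hq | hq
      exacts [hG q hq, List.mem_singleton.1 hq ▸ hpF]
    · rw [applyComp_append_singleton, Int.toNat_emod_affine _ _ _ hk]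

theorem exists_mem_reachableResidues {F : List (ℤ × ℤ)} (x : ℤ) {k : ℤ} (hk : k ≠ 0)
    {G : List (ℤ × ℤ)} (hG : ∀ p ∈ G, p ∈ F) :
    ∃ n, (applyComp G x % k).toNat ∈ reachableResidues F x k n := by
  induction G using List.reverseRecOn with
  | nil => exact ⟨0, List.mem_singleton_self _⟩
  | append_singleton G p ih =>
    obtain ⟨n, hn⟩ := ih fun q hq => hG q (List.mem_append_left _ hq)
    refine ⟨n + 1, reachableResidues_succ F x k n ▸ mem_residueStep.2 (Or.inr ⟨_, hn, _,
      List.mem_map_of_mem (hG p (List.mem_append_right _ (List.mem_singleton_self p))), ?_⟩)⟩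
    rw [applyComp_append_singleton, Int.toNat_emod_affine _ _ _ hk]

theorem reachableResidues_lt {F : List (ℤ × ℤ)} {x k : ℤ} (hk : k ≠ 0) {n : ℕ} {r : ℕ}
    (hr : r ∈ reachableResidues F x k n) : r < k.natAbs := by
  induction n generalizing r with
  | zero => exact List.mem_singleton.1 hr ▸ Int.toNat_emod_lt x hk
  | succ n ih =>
    rcases mem_residueStep.1 (reachableResidues_succ F x k n ▸ hr) with hr | ⟨z, -, p, -, rfl⟩
    exacts [ih hr, Nat.mod_lt _ (by omega)]

theorem reachableResidues_subset_natAbs (F : List (ℤ × ℤ)) (x : ℤ) {k : ℤ} (hk : k ≠ 0)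
    (n : ℕ) : reachableResidues F x k n ⊆ reachableResidues F x k k.natAbs := by
  have h := iterate_subset_iterate_card (g := residueStep (residueCoeffs F k) k.natAbs)
      (fun _ _ => residueStep_mono _ _) (subset_residueStep _ _) (U := Finset.range k.natAbs)
      (fun m _ hr => Finset.mem_range.2 (reachableResidues_lt (F := F) (x := x) (n := m) hk hr)) n
  rw [Finset.card_range] at h
  exact h

theorem exists_comp_modEq_iff (F : List (ℤ × ℤ)) (x y : ℤ) {k : ℤ} (hk : k ≠ 0) :
    (∃ G : List (ℤ × ℤ), (∀ p ∈ G, p ∈ F) ∧ applyComp G x ≡ y [ZMOD k]) ↔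
      (y % k).toNat ∈ reachableResidues F x k k.natAbs := by
  simp only [← Int.toNat_emod_inj hk]
  constructor
  · rintro ⟨G, hG, hGy⟩
    obtain ⟨n, hn⟩ := exists_mem_reachableResidues x hk hG
    exact reachableResidues_subset_natAbs F x hk n (hGy ▸ hn)
  · exact exists_comp_of_mem_reachableResidues hk

section Primrec

open Primrec

-- `ℤ` is encoded by `m ↦ 2m`, `-(m+1) ↦ 2m+1`, which is the encoding of `ℕ ⊕ ℕ`.
theorem Primrec.int_equivNatSumNat : Primrec Equiv.intEquivNatSumNat :=
  encode_iff.1 <| Primrec.encode.of_eq fun z => by cases z <;> rfl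

theorem Primrec.int_natAbs : Primrec Int.natAbs :=
  (sumCasesOn int_equivNatSumNat snd.to₂ (succ.comp snd).to₂).of_eq fun z => by cases z <;> rfl

theorem Primrec.int_toNat_emod : Primrec₂ fun a k : ℤ => (a % k).toNat := by
  have hK : Primrec fun q : (ℤ × ℤ) × ℕ => q.1.2.natAbs := int_natAbs.comp (snd.comp fst)
  refine (sumCasesOn (int_equivNatSumNat.comp fst) (nat_mod.comp snd hK).to₂
    (nat_sub.comp hK (succ.comp (nat_mod.comp snd hK))).to₂).of_eq fun ⟨a, k⟩ => ?_
  cases a with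
  | ofNat m => rfl
  | negSucc m =>
    show k.natAbs - (m % k.natAbs + 1) = (Int.subNatNat k.natAbs (m % k.natAbs + 1)).toNat
    rw [Int.subNatNat_eq_coe]
    omega

variable {α : Type*} [Primcodable α]

theorem Primrec.residueCoeffs {F : α → List (ℤ × ℤ)} {k : α → ℤ} (hF : Primrec F)
    (hk : Primrec k) : Primrec fun a => residueCoeffs (F a) (k a) :=
  list_map hF <| pair (int_toNat_emod.comp (fst.comp snd) (hk.comp fst))
    (int_toNat_emod.comp (snd.comp snd) (hk.comp fst)) |>.to₂

theorem Primrec.residueStep {c : α → List (ℕ × ℕ)} {K : α → ℕ} {S : α → List ℕ}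
    (hc : Primrec c) (hK : Primrec K) (hS : Primrec S) :
    Primrec fun a => residueStep (c a) (K a) (S a) := by
  have himage : Primrec₂ fun (a : α) (z : ℕ) => (c a).map fun p => (p.1 * z + p.2) % K a :=
    list_map (hc.comp fst) (nat_mod.comp (nat_add.comp (nat_mul.comp (fst.comp snd)
      (snd.comp fst)) (snd.comp snd)) (hK.comp (fst.comp fst))).to₂
  exact list_append.comp hS (list_flatMap hS himage)

theorem Primrec.reachableResidues {F : α → List (ℤ × ℤ)} {x k : α → ℤ} {n : α → ℕ}
    (hF : Primrec F) (hx : Primrec x) (hk : Primrec k) (hn : Primrec n) :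
    Primrec fun a => reachableResidues (F a) (x a) (k a) (n a) :=
  nat_iterate hn (list_cons.comp (int_toNat_emod.comp hx hk) (const []))
    (Primrec.residueStep ((hF.residueCoeffs hk).comp fst) ((int_natAbs.comp hk).comp fst) snd).to₂

theorem primrecPred_mem_reachableResidues :
    PrimrecPred fun q : List (ℤ × ℤ) × ℤ × ℤ × ℤ =>
      q.2.2.2 ≠ 0 ∧ (q.2.2.1 % q.2.2.2).toNat ∈
        reachableResidues q.1 q.2.1 q.2.2.2 q.2.2.2.natAbs := by
  have hk : Primrec fun q : List (ℤ × ℤ) × ℤ × ℤ × ℤ => q.2.2.2 := snd.comp (snd.comp snd)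
  have hy : Primrec fun q : List (ℤ × ℤ) × ℤ × ℤ × ℤ => q.2.2.1 := fst.comp (snd.comp snd)
  have hmem : PrimrecRel fun (r : ℕ) (L : List ℕ) => r ∈ L :=
    ((PrimrecRel.exists_mem_list Primrec.eq).comp snd fst).of_eq fun _ => by simp
  refine (Primrec.eq.comp hk (const 0)).not.and (hmem.comp (int_toNat_emod.comp hy hk) ?_)
  exact Primrec.reachableResidues fst (fst.comp snd) hk (int_natAbs.comp hk)

end Primrec

/-- For a finite set `F` of affine functions on `ℤ` (given by their coefficient pairs),
`k ∈ ℤ` with `k ≠ 0`, and `x, y ∈ ℤ`, the proposition "there exists an `F`-composition `G`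
with `G(x) ≡ y (mod k)`" is decidable (uniformly computable in `F`, `x`, `y`, `k`). -/
theorem mod_reachability_decidable :
    ComputablePred (fun q : List (ℤ × ℤ) × ℤ × ℤ × ℤ =>
      q.2.2.2 ≠ 0 ∧
        ∃ G : List (ℤ × ℤ), (∀ p ∈ G, p ∈ q.1) ∧ applyComp G q.2.1 ≡ q.2.2.1 [ZMOD q.2.2.2]) :=
  primrecPred_mem_reachableResidues.computablePred.of_eq fun q =>
    and_congr_right fun hk => (exists_comp_modEq_iff q.1 q.2.1 q.2.2.1 hk).symm
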